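/- Let G be a strongly connected simple digraph on n ≥ 2 vertices and 0 ≤ α < 1. Then μ_α(G) > α·Tr_max, where Tr_max is the maximum vertex transmission of G. -/

import Mathlib

open Matrix BigOperators

/-- Spectral radius of a real square matrix: the largest modulus of its complex eigenvalues. -/
noncomputable def specRad {n : ℕ} (M : Matrix (Fin n) (Fin n) ℝ) : ℝ :=
  sSup {r : ℝ | ∃ μ ∈ spectrum ℂ (M.map (fun x => (x : ℂ))), r = ‖μ‖}

/-- A matrix is irreducible iff its associated digraph is strongly connected. -/
def Irred {n : ℕ} (M : Matrix (Fin n) (Fin n) ℝ) : Prop :=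
  ∀ i j : Fin n, Relation.ReflTransGen (fun a b => M a b ≠ 0) i j

/-- A directed walk of length `k` from `i` to `j` in a digraph. -/
def DWalk {n : ℕ} (G : Digraph (Fin n)) (i j : Fin n) (k : ℕ) : Prop :=
  ∃ f : ℕ → Fin n, f 0 = i ∧ f k = j ∧ ∀ l < k, G.Adj (f l) (f (l + 1))

/-- A digraph is strongly connected iff every vertex can reach every vertex. -/
def SConn {n : ℕ} (G : Digraph (Fin n)) : Prop :=
  ∀ i j : Fin n, ∃ k : ℕ, DWalk G i j k

/-- A simple digraph has no loops. -/
def Loopless {n : ℕ} (G : Digraph (Fin n)) : Prop := ∀ i : Fin n, ¬ G.Adj i i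

/-- Directed distance from `i` to `j`. -/
noncomputable def ddist {n : ℕ} (G : Digraph (Fin n)) (i j : Fin n) : ℕ :=
  sInf {k : ℕ | DWalk G i j k}

/-- Transmission of vertex `i`: sum of distances from `i` to all vertices. -/
noncomputable def transm {n : ℕ} (G : Digraph (Fin n)) (i : Fin n) : ℝ :=
  ∑ j : Fin n, (ddist G i j : ℝ)

/-- The generalized distance matrix `D_α(G) = α·Diag(Tr) + (1-α)·D(G)`. -/
noncomputable def Dalpha {n : ℕ} (α : ℝ) (G : Digraph (Fin n)) : Matrix (Fin n) (Fin n) ℝ :=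
  α • Matrix.diagonal (transm G) + (1 - α) • (Matrix.of fun i j => (ddist G i j : ℝ))

/-- The `D_α` spectral radius of a digraph. -/
noncomputable def mualpha {n : ℕ} (α : ℝ) (G : Digraph (Fin n)) : ℝ :=
  specRad (Dalpha α G)

/-- Isomorphism of digraphs on `Fin n`. -/
def IsoD {n : ℕ} (G H : Digraph (Fin n)) : Prop :=
  ∃ e : Fin n ≃ Fin n, ∀ i j : Fin n, G.Adj i j ↔ H.Adj (e i) (e j)

/-- The digraph `K(n,k,m)`: vertices `0..k-1` form `K↔ₖ`, `k..k+m-1` form `K↔ₘ`,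
`k+m..n-1` form `K↔_{n-k-m}`; all arcs present except those from `K↔_{n-k-m}` to `K↔ₘ`. -/
def KD (n k m : ℕ) : Digraph (Fin n) :=
  ⟨fun i j => i ≠ j ∧ ¬(k + m ≤ (i : ℕ) ∧ k ≤ (j : ℕ) ∧ (j : ℕ) < k + m)⟩

/-- A directed walk staying inside a vertex set `A`. -/
def DWalkIn {n : ℕ} (G : Digraph (Fin n)) (A : Set (Fin n)) (i j : Fin n) (k : ℕ) : Prop :=
  ∃ f : ℕ → Fin n, f 0 = i ∧ f k = j ∧ (∀ l ≤ k, f l ∈ A) ∧ ∀ l < k, G.Adj (f l) (f (l + 1))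

/-- The induced subdigraph on `A` is strongly connected. -/
def SCOn {n : ℕ} (G : Digraph (Fin n)) (A : Set (Fin n)) : Prop :=
  ∀ i ∈ A, ∀ j ∈ A, ∃ k : ℕ, DWalkIn G A i j k


/-!
For a nonnegative matrix `M` with spectral radius `ρ`, the diagonal entries of its powers
satisfy `((M ^ m) i i) ^ k ≤ (M ^ (m * k)) i i ≤ trace (M ^ (m * k)) ≤ N * ρ ^ (m * k)`
for every `k`, the trace being the sum of the `m * k`-th powers of the eigenvalues. Letting
`k → ∞` gives `(M ^ m) i i ≤ ρ ^ m`; for `m = 2` this yields `M i i ^ 2 + M i j * M j i ≤ ρ ^ 2`.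
For `D_α(G)` at a vertex `i` of maximal transmission, `M i i = α * Tr_max`, and strong
connectivity makes `M i j * M j i ≥ (1 - α) ^ 2 > 0` for any `j ≠ i`.
-/

lemma le_of_forall_pow_le_mul_pow {x y C : ℝ} (hy : 0 ≤ y)
    (h : ∀ k : ℕ, 0 < k → x ^ k ≤ C * y ^ k) : x ≤ y := by
  by_contra! hxy
  have hx : 0 < x := hy.trans_lt hxy
  have hlim : Filter.Tendsto (fun k : ℕ => C * (y / x) ^ k) Filter.atTop (nhds 0) := by
    simpa using (tendsto_pow_atTop_nhds_zero_of_lt_one (div_nonneg hy hx.le)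
      ((div_lt_one hx).mpr hxy)).const_mul C
  obtain ⟨k, hk_small, hk_pos⟩ :=
    ((hlim.eventually (gt_mem_nhds one_pos)).and (Filter.eventually_ge_atTop 1)).exists
  have hxk : 0 < x ^ k := pow_pos hx k
  have : C * y ^ k < x ^ k := by
    rwa [div_pow, ← mul_div_assoc, div_lt_one hxk] at hk_small
  exact (h k hk_pos).not_gt this

section Nonneg

variable {ι R : Type*} [Fintype ι] [DecidableEq ι] [Semiring R] [PartialOrder R]
  [IsOrderedRing R] {M : Matrix ι ι R}

lemma apply_self_pow_le_pow_apply_self (hM : ∀ i j, 0 ≤ M i j) (i : ι) (k : ℕ) :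
    M i i ^ k ≤ (M ^ k) i i := by
  induction k with
  | zero => simp
  | succ k ih =>
    rw [pow_succ, pow_succ, mul_apply]
    calc M i i ^ k * M i i ≤ (M ^ k) i i * M i i := by gcongr; exact hM i i
      _ ≤ ∑ l, (M ^ k) i l * M l i :=
        Finset.single_le_sum (f := fun l => (M ^ k) i l * M l i)
          (fun l _ => mul_nonneg (pow_apply_nonneg hM k i l) (hM l i)) (Finset.mem_univ i)

lemma sq_add_mul_le_sq_apply_self (hM : ∀ i j, 0 ≤ M i j) {i j : ι} (hij : i ≠ j) :
    M i i ^ 2 + M i j * M j i ≤ (M ^ 2) i i := by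
  have hsub : ∑ l ∈ {i, j}, M i l * M l i ≤ ∑ l, M i l * M l i :=
    Finset.sum_le_sum_of_subset_of_nonneg (Finset.subset_univ _)
      (fun l _ _ => mul_nonneg (hM i l) (hM l i))
  rw [Finset.sum_pair hij] at hsub
  rw [sq, sq, mul_apply]
  exact hsub

end Nonneg

section SpectralRadius

variable {N : ℕ} (M : Matrix (Fin N) (Fin N) ℝ)

lemma specRad_nonneg : 0 ≤ specRad M :=
  Real.sSup_nonneg (by rintro _ ⟨μ, -, rfl⟩; exact norm_nonneg μ)

lemma norm_le_specRad {μ : ℂ} (hμ : μ ∈ spectrum ℂ (M.map (fun x => (x : ℂ)))) :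
    ‖μ‖ ≤ specRad M := by
  refine le_csSup ?_ ⟨μ, hμ, rfl⟩
  refine ((M.map (fun x => (x : ℂ))).finite_spectrum.image norm).bddAbove.mono ?_
  rintro _ ⟨ν, hν, rfl⟩
  exact ⟨ν, hν, rfl⟩

lemma trace_pow_le_mul_specRad_pow {m : ℕ} (hm : 0 < m) :
    (M ^ m).trace ≤ N * specRad M ^ m := by
  set A := M.map (fun x : ℝ => (x : ℂ))
  have hA : A ^ m = (M ^ m).map (fun x : ℝ => (x : ℂ)) :=
    (map_pow (Complex.ofRealHom.mapMatrix) M m).symm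
  have hroots : ∀ ν ∈ (A ^ m).charpoly.roots, ‖ν‖ ≤ specRad M ^ m := by
    intro ν hν
    obtain ⟨μ, hμ, rfl⟩ : ν ∈ (· ^ m) '' spectrum ℂ A := by
      rw [← spectrum.map_pow_of_pos A hm]
      exact mem_spectrum_of_isRoot_charpoly (Polynomial.isRoot_of_mem_roots hν)
    rw [norm_pow]
    gcongr
    exact norm_le_specRad M hμ
  have hcard : Multiset.card (A ^ m).charpoly.roots ≤ N := by
    simpa [charpoly_natDegree_eq_dim] using (A ^ m).charpoly.card_roots'
  have htrace : (A ^ m).trace = ((M ^ m).trace : ℂ) := by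
    rw [hA]
    simp [trace]
  calc (M ^ m).trace ≤ ‖(A ^ m).trace‖ := by
        rw [htrace, Complex.norm_real, Real.norm_eq_abs]
        exact le_abs_self _
    _ ≤ ((A ^ m).charpoly.roots.map norm).sum := by
        rw [trace_eq_sum_roots_charpoly]
        exact norm_multiset_sum_le _
    _ ≤ Multiset.card ((A ^ m).charpoly.roots.map norm) • specRad M ^ m :=
        Multiset.sum_le_card_nsmul _ _ fun x hx => by
          obtain ⟨ν, hν, rfl⟩ := Multiset.mem_map.mp hx
          exact hroots ν hν
    _ ≤ N * specRad M ^ m := by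
        rw [Multiset.card_map, nsmul_eq_mul]
        gcongr
        exact pow_nonneg (specRad_nonneg M) m

variable {M}

lemma pow_apply_self_le_specRad_pow (hM : ∀ i j, 0 ≤ M i j) (i : Fin N) {m : ℕ} (hm : 0 < m) :
    (M ^ m) i i ≤ specRad M ^ m := by
  refine le_of_forall_pow_le_mul_pow (C := N) (pow_nonneg (specRad_nonneg M) m) fun k hk => ?_
  calc (M ^ m) i i ^ k ≤ ((M ^ m) ^ k) i i :=
        apply_self_pow_le_pow_apply_self (pow_apply_nonneg hM m) i k
    _ ≤ (M ^ (m * k)).trace := by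
        rw [pow_mul]
        exact Finset.single_le_sum (f := fun l => ((M ^ m) ^ k) l l)
          (fun l _ => pow_apply_nonneg (pow_apply_nonneg hM m) k l l) (Finset.mem_univ i)
    _ ≤ N * specRad M ^ (m * k) := trace_pow_le_mul_specRad_pow M (by positivity)
    _ = N * (specRad M ^ m) ^ k := by rw [pow_mul]

lemma apply_self_lt_specRad (hM : ∀ i j, 0 ≤ M i j) {i j : Fin N} (hij : i ≠ j)
    (hcycle : 0 < M i j * M j i) : M i i < specRad M := by
  have hsq := sq_add_mul_le_sq_apply_self hM hij
  have hρ := pow_apply_self_le_specRad_pow hM i two_pos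
  exact lt_of_pow_lt_pow_left₀ 2 (specRad_nonneg M) (by linarith)

end SpectralRadius

section Distance

variable {n : ℕ} (G : Digraph (Fin n))

lemma ddist_self (i : Fin n) : ddist G i i = 0 :=
  Nat.sInf_eq_zero.mpr (Or.inl ⟨fun _ => i, rfl, rfl, fun _ h => (Nat.not_lt_zero _ h).elim⟩)

lemma ddist_pos {i j : Fin n} (hreach : ∃ k, DWalk G i j k) (hij : i ≠ j) :
    0 < ddist G i j := by
  refine Nat.pos_of_ne_zero fun h0 => hij ?_
  obtain ⟨f, hf0, hfk, -⟩ : DWalk G i j (ddist G i j) := Nat.sInf_mem hreach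
  rw [h0] at hfk
  exact hf0.symm.trans hfk

lemma transm_nonneg (i : Fin n) : 0 ≤ transm G i :=
  Finset.sum_nonneg fun _ _ => Nat.cast_nonneg _

variable {G} {α : ℝ}

lemma Dalpha_apply_self (i : Fin n) : Dalpha α G i i = α * transm G i := by
  simp [Dalpha, ddist_self]

lemma Dalpha_apply_of_ne {i j : Fin n} (hij : i ≠ j) :
    Dalpha α G i j = (1 - α) * ddist G i j := by
  simp [Dalpha, hij]

lemma Dalpha_nonneg (h0 : 0 ≤ α) (h1 : α ≤ 1) (i j : Fin n) : 0 ≤ Dalpha α G i j := by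
  obtain rfl | hij := eq_or_ne i j
  · rw [Dalpha_apply_self]
    exact mul_nonneg h0 (transm_nonneg G i)
  · rw [Dalpha_apply_of_ne hij]
    exact mul_nonneg (by linarith) (Nat.cast_nonneg _)

end Distance

theorem stmt8_general {n : ℕ} (hn : 2 ≤ n) (G : Digraph (Fin n)) (hsc : SConn G)
    (α : ℝ) (h0 : 0 ≤ α) (h1 : α < 1) :
    α * (⨆ i : Fin n, transm G i) < mualpha α G := by
  have : Nonempty (Fin n) := ⟨⟨0, by omega⟩⟩
  obtain ⟨i, hi⟩ := Finite.exists_max (transm G)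
  obtain ⟨j, hji⟩ := Fintype.exists_ne_of_one_lt_card (by rw [Fintype.card_fin]; omega) i
  have hsup : ⨆ k, transm G k = transm G i :=
    le_antisymm (ciSup_le hi) (le_ciSup (Finite.bddAbove_range _) i)
  have hoff : ∀ {a b : Fin n}, a ≠ b → 0 < Dalpha α G a b := fun hab => by
    rw [Dalpha_apply_of_ne hab]
    exact mul_pos (by linarith) (Nat.cast_pos.mpr (ddist_pos G (hsc _ _) hab))
  rw [hsup, ← Dalpha_apply_self]
  exact apply_self_lt_specRad (Dalpha_nonneg h0 h1.le) hji.symm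
    (mul_pos (hoff hji.symm) (hoff hji))

theorem stmt8 {n : ℕ} (hn : 2 ≤ n) (G : Digraph (Fin n)) (hG : Loopless G) (hsc : SConn G)
    (α : ℝ) (h0 : 0 ≤ α) (h1 : α < 1) :
    α * (⨆ i : Fin n, transm G i) < mualpha α G :=
  stmt8_general hn G hsc α h0 h1
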